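/- arXiv:1309.0559 — 5 statements merged into one kernel-verified Lean document; each statement's English description precedes it below -/
import Mathlib

section
/- The map ρ sending the model matrix [[K,M],[L,N]] to the 3×3 block upper-triangular matrix [[I, M, K],[0, N, L],[0, 0, I]] is an injective group homomorphism from the group of model matrices with invertible N under the series product to the general linear group (under ordinary matrix multiplication). That is, ρ(V₂ ∗ V₁) = ρ(V₂)·ρ(V₁). -/
open Matrix

/-- The embedding `ρ([[K,M],[L,N]]) = [[I,M,K],[0,N,L],[0,0,I]]` of a model matrix into
3×3 block upper-triangular matrices, with block index type `Fin x ⊕ (Fin u ⊕ Fin x)`. -/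
noncomputable def rho {x u : ℕ}
    (K : Matrix (Fin x) (Fin x) ℂ) (M : Matrix (Fin x) (Fin u) ℂ)
    (L : Matrix (Fin u) (Fin x) ℂ) (N : Matrix (Fin u) (Fin u) ℂ) :
    Matrix (Fin x ⊕ (Fin u ⊕ Fin x)) (Fin x ⊕ (Fin u ⊕ Fin x)) ℂ :=
  fromBlocks 1 (fromCols M K) 0 (fromBlocks N L 0 1)

theorem Matrix.fromCols_add_fromCols {R m n₁ n₂ : Type*} [Add R] (A₁ B₁ : Matrix m n₁ R)
    (A₂ B₂ : Matrix m n₂ R) :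
    fromCols A₁ A₂ + fromCols B₁ B₂ = fromCols (A₁ + B₁) (A₂ + B₂) := by
  ext i (j | j) <;> rfl

section
variable {x u : ℕ}

theorem rho_mul_rho (K₁ K₂ : Matrix (Fin x) (Fin x) ℂ) (M₁ M₂ : Matrix (Fin x) (Fin u) ℂ)
    (L₁ L₂ : Matrix (Fin u) (Fin x) ℂ) (N₁ N₂ : Matrix (Fin u) (Fin u) ℂ) :
    rho K₂ M₂ L₂ N₂ * rho K₁ M₁ L₁ N₁ =
      rho (K₁ + M₂ * L₁ + K₂) (M₁ + M₂ * N₁) (L₂ + N₂ * L₁) (N₂ * N₁) := by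
  simp only [rho, fromBlocks_multiply, fromCols_mul_fromBlocks, Matrix.one_mul, Matrix.mul_one,
    Matrix.mul_zero, Matrix.zero_mul, add_zero, zero_add, fromCols_add_fromCols]
  rw [add_assoc K₁, add_comm (N₂ * L₁)]

theorem rho_inj {K K' : Matrix (Fin x) (Fin x) ℂ} {M M' : Matrix (Fin x) (Fin u) ℂ}
    {L L' : Matrix (Fin u) (Fin x) ℂ} {N N' : Matrix (Fin u) (Fin u) ℂ} :
    rho K M L N = rho K' M' L' N' ↔ K = K' ∧ M = M' ∧ L = L' ∧ N = N' := by
  simp only [rho, fromBlocks_inj, fromCols_ext_iff, true_and, and_true]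
  tauto

theorem det_rho (K : Matrix (Fin x) (Fin x) ℂ) (M : Matrix (Fin x) (Fin u) ℂ)
    (L : Matrix (Fin u) (Fin x) ℂ) (N : Matrix (Fin u) (Fin u) ℂ) :
    (rho K M L N).det = N.det := by
  rw [rho, det_fromBlocks_zero₂₁, det_fromBlocks_zero₂₁, det_one, one_mul, mul_one]

theorem isUnit_rho_iff {K : Matrix (Fin x) (Fin x) ℂ} {M : Matrix (Fin x) (Fin u) ℂ}
    {L : Matrix (Fin u) (Fin x) ℂ} {N : Matrix (Fin u) (Fin u) ℂ} :
    IsUnit (rho K M L N) ↔ IsUnit N := by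
  rw [isUnit_iff_isUnit_det, isUnit_iff_isUnit_det, det_rho]

end

/-- `ρ` is an injective group homomorphism from the group of model matrices
with invertible `N` (under the series product) into the general linear group:
`ρ(V₂ ∗ V₁) = ρ(V₂) · ρ(V₁)`, and `ρ` is injective. -/
theorem rho_hom_injective {x u : ℕ} :
    (∀ (K₁ K₂ : Matrix (Fin x) (Fin x) ℂ) (M₁ M₂ : Matrix (Fin x) (Fin u) ℂ)
        (L₁ L₂ : Matrix (Fin u) (Fin x) ℂ) (N₁ N₂ : Matrix (Fin u) (Fin u) ℂ),
        IsUnit N₁ → IsUnit N₂ →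
        rho (K₁ + M₂ * L₁ + K₂) (M₁ + M₂ * N₁) (L₂ + N₂ * L₁) (N₂ * N₁) =
          rho K₂ M₂ L₂ N₂ * rho K₁ M₁ L₁ N₁) ∧
    (∀ (K K' : Matrix (Fin x) (Fin x) ℂ) (M M' : Matrix (Fin x) (Fin u) ℂ)
        (L L' : Matrix (Fin u) (Fin x) ℂ) (N N' : Matrix (Fin u) (Fin u) ℂ),
        rho K M L N = rho K' M' L' N' → K = K' ∧ M = M' ∧ L = L' ∧ N = N') ∧
    (∀ (K : Matrix (Fin x) (Fin x) ℂ) (M : Matrix (Fin x) (Fin u) ℂ)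
        (L : Matrix (Fin u) (Fin x) ℂ) (N : Matrix (Fin u) (Fin u) ℂ),
        IsUnit N → IsUnit (rho K M L N)) :=
  ⟨fun K₁ K₂ M₁ M₂ L₁ L₂ N₁ N₂ _ _ => (rho_mul_rho K₁ K₂ M₁ M₂ L₁ L₂ N₁ N₂).symm,
    fun _ _ _ _ _ _ _ _ => rho_inj.mp, fun _ _ _ _ => isUnit_rho_iff.mpr⟩
end

section
/- A coefficient matrix G (a 2×2 block operator matrix on 𝔥 ⊕ (𝔥 ⊗ 𝔎)) satisfies both G + G† + G†δ̂G = 0 and G + G† + Gδ̂G† = 0 (where δ̂ = [[0,0],[0,I]]) if and only if G has the form G = [[-(1/2)L†L - iH, -L†S],[L, S - I]] for some unitary S on 𝔥 ⊗ 𝔎, some operator L : 𝔥 → 𝔥 ⊗ 𝔎, and some self-adjoint H on 𝔥. -/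
/-! Write `G = [[K, M], [L, S - 1]]`. Both conditions split blockwise: the lower-right blocks say
`S†S = 1 = SS†`, an off-diagonal block says `M = -L†S`, and the upper-left block of the first
condition says that the real part of `K` is `-(1/2) L†L`; once `S` is unitary the remaining
blocks follow from these. Minus the imaginary part of `K` is the self-adjoint `H`. -/

open Matrix

/-- The Hudson–Evans projection `δ̂ = [[0,0],[0,I]]` on `𝔥 ⊕ (𝔥 ⊗ 𝔎)`, with
`dim 𝔥 = p` and `dim (𝔥 ⊗ 𝔎) = q`. -/
noncomputable def deltaHat (p q : ℕ) : Matrix (Fin p ⊕ Fin q) (Fin p ⊕ Fin q) ℂ :=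
  fromBlocks 0 0 0 1

open ComplexStarModule in
theorem add_star_add_eq_zero_iff {A : Type*} [AddCommGroup A] [Module ℂ A] [StarAddMonoid A]
    [StarModule ℂ A] {a c : A} (hc : IsSelfAdjoint c) :
    a + star a + c = 0 ↔ ∃ h : A, IsSelfAdjoint h ∧ a = -(1 / 2 : ℂ) • c - Complex.I • h := by
  constructor
  · intro hac
    refine ⟨-ℑ a, (ℑ a).prop.neg, ?_⟩
    have hre : (ℜ a : A) = -(1 / 2 : ℂ) • c := by
      rw [realPart_apply_coe, eq_neg_of_add_eq_zero_left hac, ← Complex.coe_smul]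
      norm_num
    rw [smul_neg, sub_neg_eq_add, ← hre, realPart_add_I_smul_imaginaryPart]
  · rintro ⟨h, hh, rfl⟩
    simp only [star_sub, star_smul, star_neg, hc.star_eq, hh.star_eq, Complex.star_def,
      Complex.conj_I, map_div₀, map_one, Complex.conj_ofNat]
    module

section Blocks

variable {p q : ℕ} (K : Matrix (Fin p) (Fin p) ℂ) (M : Matrix (Fin p) (Fin q) ℂ)
  (L : Matrix (Fin q) (Fin p) ℂ) (S : Matrix (Fin q) (Fin q) ℂ)

theorem fromBlocks_add_conjTranspose_add_conjTranspose_mul_deltaHat_mul :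
    fromBlocks K M L (S - 1) + (fromBlocks K M L (S - 1))ᴴ
        + (fromBlocks K M L (S - 1))ᴴ * deltaHat p q * fromBlocks K M L (S - 1) =
      fromBlocks (K + Kᴴ + Lᴴ * L) (M + Lᴴ * S) (Mᴴ + Sᴴ * L) (Sᴴ * S - 1) := by
  simp only [deltaHat, fromBlocks_conjTranspose, fromBlocks_multiply, fromBlocks_add,
    Matrix.mul_zero, Matrix.zero_mul, Matrix.mul_one, add_zero, zero_add,
    conjTranspose_sub, conjTranspose_one, Matrix.sub_mul, Matrix.mul_sub, Matrix.one_mul]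
  congr 1 <;> abel

theorem fromBlocks_add_conjTranspose_add_mul_deltaHat_mul_conjTranspose :
    fromBlocks K M L (S - 1) + (fromBlocks K M L (S - 1))ᴴ
        + fromBlocks K M L (S - 1) * deltaHat p q * (fromBlocks K M L (S - 1))ᴴ =
      fromBlocks (K + Kᴴ + M * Mᴴ) (M * Sᴴ + Lᴴ) (L + S * Mᴴ) (S * Sᴴ - 1) := by
  simp only [deltaHat, fromBlocks_conjTranspose, fromBlocks_multiply, fromBlocks_add,
    Matrix.mul_zero, Matrix.zero_mul, Matrix.mul_one, add_zero, zero_add,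
    conjTranspose_sub, conjTranspose_one, Matrix.sub_mul, Matrix.mul_sub, Matrix.one_mul]
  congr 1 <;> abel

theorem ito_conditions_fromBlocks_iff :
    (fromBlocks K M L (S - 1) + (fromBlocks K M L (S - 1))ᴴ
        + (fromBlocks K M L (S - 1))ᴴ * deltaHat p q * fromBlocks K M L (S - 1) = 0 ∧
      fromBlocks K M L (S - 1) + (fromBlocks K M L (S - 1))ᴴ
        + fromBlocks K M L (S - 1) * deltaHat p q * (fromBlocks K M L (S - 1))ᴴ = 0) ↔
    S ∈ unitaryGroup (Fin q) ℂ ∧ K + Kᴴ + Lᴴ * L = 0 ∧ M = -(Lᴴ * S) := by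
  rw [fromBlocks_add_conjTranspose_add_conjTranspose_mul_deltaHat_mul,
    fromBlocks_add_conjTranspose_add_mul_deltaHat_mul_conjTranspose, ← fromBlocks_zero,
    fromBlocks_inj, fromBlocks_inj, Unitary.mem_iff, star_eq_conjTranspose]
  simp only [sub_eq_zero]
  constructor
  · rintro ⟨⟨hK, hM, -, hSS⟩, -, -, -, hSS'⟩
    exact ⟨⟨hSS, hSS'⟩, hK, eq_neg_of_add_eq_zero_left hM⟩
  · rintro ⟨⟨hSS, hSS'⟩, hK, rfl⟩
    have hSSL : S * (Sᴴ * L) = L := by rw [← Matrix.mul_assoc, hSS', Matrix.one_mul]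
    simp [Matrix.mul_assoc, hSS, hSS', hSSL, hK]

end Blocks

/-- A coefficient matrix `G` satisfies the isometry and co-isometry conditions
`G + G† + G†δ̂G = 0` and `G + G† + Gδ̂G† = 0` if and only if it is of
Hudson–Parthasarathy form `G = [[-(1/2)L†L - iH, -L†S],[L, S - I]]` with `S` unitary
and `H` self-adjoint. -/
theorem unitary_ito_generator_iff {p q : ℕ}
    (G : Matrix (Fin p ⊕ Fin q) (Fin p ⊕ Fin q) ℂ) :
    (G + Gᴴ + Gᴴ * deltaHat p q * G = 0 ∧ G + Gᴴ + G * deltaHat p q * Gᴴ = 0) ↔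
    ∃ (S : Matrix (Fin q) (Fin q) ℂ) (L : Matrix (Fin q) (Fin p) ℂ)
      (H : Matrix (Fin p) (Fin p) ℂ),
      S ∈ Matrix.unitaryGroup (Fin q) ℂ ∧ Hᴴ = H ∧
      G = fromBlocks (-(1/2 : ℂ) • (Lᴴ * L) - Complex.I • H) (-(Lᴴ * S)) L (S - 1) := by
  obtain ⟨K, M, L, S, rfl⟩ : ∃ K M L S, G = fromBlocks K M L (S - 1) :=
    ⟨_, _, _, G.toBlocks₂₂ + 1, by rw [add_sub_cancel_right, fromBlocks_toBlocks]⟩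
  have hLL : IsSelfAdjoint (Lᴴ * L) := (isHermitian_conjTranspose_mul_self L).isSelfAdjoint
  rw [ito_conditions_fromBlocks_iff]
  constructor
  · rintro ⟨hS, hK, rfl⟩
    obtain ⟨H, hH, rfl⟩ := (add_star_add_eq_zero_iff hLL).mp hK
    exact ⟨S, L, H, hS, hH, rfl⟩
  · rintro ⟨S', L', H, hS', hH, hG⟩
    obtain ⟨rfl, rfl, rfl, hS⟩ := fromBlocks_inj.mp hG
    obtain rfl := sub_left_inj.mp hS
    exact ⟨hS', (add_star_add_eq_zero_iff hLL).mpr ⟨H, hH, rfl⟩, rfl⟩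
end

section
/- For Hudson–Parthasarathy triples, the series product of the associated Itô generator matrices is again an Itô generator matrix of a triple: G_{(S₂,L₂,H₂)} ◁ G_{(S₁,L₁,H₁)} = G_{(S₂S₁, L₂ + S₂L₁, H₁ + H₂ + Im(L₂†S₂L₁))}, where G_{(S,L,H)} = [[-(1/2)L†L - iH, -L†S],[L, S-I]] and G₂ ◁ G₁ = G₁ + G₂ + G₂δ̂G₁ with δ̂ = [[0,0],[0,I]]. -/
/-!
The series product acts blockwise on `[[A, B], [C, D]]`, and every block except the top-left
one matches by plain algebra (plus `S₂ᴴ S₂ = 1` in the top-right block). In the top-left block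
the isometry gives `(L₂ + S₂L₁)ᴴ(L₂ + S₂L₁) = L₂ᴴL₂ + L₁ᴴL₁ + X + Xᴴ` with `X = L₂ᴴS₂L₁`; the
Hamiltonian correction `-i Im X = -(X - Xᴴ)/2` then combines with `-(X + Xᴴ)/2` into the cross
term `-X` contributed by the series product.
-/

open Matrix

/-- The Itô generator matrix `G_(S,L,H) = [[-(1/2)L†L - iH, -L†S],[L, S-I]]`. -/
noncomputable def hpGen {p q : ℕ} (S : Matrix (Fin q) (Fin q) ℂ)
    (L : Matrix (Fin q) (Fin p) ℂ) (H : Matrix (Fin p) (Fin p) ℂ) :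
    Matrix (Fin p ⊕ Fin q) (Fin p ⊕ Fin q) ℂ :=
  fromBlocks (-(1/2 : ℂ) • (Lᴴ * L) - Complex.I • H) (-(Lᴴ * S)) L (S - 1)

/-- The series product `G₂ ◁ G₁ = G₁ + G₂ + G₂δ̂G₁` of coefficient matrices. -/
noncomputable def seriesProd {p q : ℕ}
    (G₂ G₁ : Matrix (Fin p ⊕ Fin q) (Fin p ⊕ Fin q) ℂ) :
    Matrix (Fin p ⊕ Fin q) (Fin p ⊕ Fin q) ℂ :=
  G₁ + G₂ + G₂ * deltaHat p q * G₁

theorem seriesProd_fromBlocks {p q : ℕ}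
    (A₁ A₂ : Matrix (Fin p) (Fin p) ℂ) (B₁ B₂ : Matrix (Fin p) (Fin q) ℂ)
    (C₁ C₂ : Matrix (Fin q) (Fin p) ℂ) (D₁ D₂ : Matrix (Fin q) (Fin q) ℂ) :
    seriesProd (fromBlocks A₂ B₂ C₂ D₂) (fromBlocks A₁ B₁ C₁ D₁) =
      fromBlocks (A₁ + A₂ + B₂ * C₁) (B₁ + B₂ + B₂ * D₁)
        (C₁ + C₂ + D₂ * C₁) (D₁ + D₂ + D₂ * D₁) := by
  simp only [seriesProd, deltaHat, fromBlocks_multiply, fromBlocks_add, Matrix.mul_zero,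
    Matrix.zero_mul, Matrix.mul_one, add_zero, zero_add]

theorem conjTranspose_mul_self_add_mul {α m n : Type*} [Fintype m] [DecidableEq m]
    [Ring α] [StarRing α] {S : Matrix m m α} (hS : Sᴴ * S = 1)
    (L₁ L₂ : Matrix m n α) :
    (L₂ + S * L₁)ᴴ * (L₂ + S * L₁) =
      L₂ᴴ * L₂ + L₁ᴴ * L₁ + (L₂ᴴ * S * L₁ + L₁ᴴ * Sᴴ * L₂) := by
  have hL₁ : L₁ᴴ * Sᴴ * (S * L₁) = L₁ᴴ * L₁ := by
    rw [Matrix.mul_assoc, ← Matrix.mul_assoc Sᴴ, hS, Matrix.one_mul]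
  simp only [conjTranspose_add, conjTranspose_mul, Matrix.add_mul, Matrix.mul_add, hL₁,
    Matrix.mul_assoc]
  abel

theorem hpGen_seriesProd_general {p q : ℕ}
    (S₁ S₂ : Matrix (Fin q) (Fin q) ℂ)
    (L₁ L₂ : Matrix (Fin q) (Fin p) ℂ)
    (H₁ H₂ : Matrix (Fin p) (Fin p) ℂ)
    (hS₂ : S₂ ∈ Matrix.unitaryGroup (Fin q) ℂ) :
    seriesProd (hpGen S₂ L₂ H₂) (hpGen S₁ L₁ H₁) =
      hpGen (S₂ * S₁) (L₂ + S₂ * L₁)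
        (H₁ + H₂ + (2 * Complex.I)⁻¹ • (L₂ᴴ * S₂ * L₁ - L₁ᴴ * S₂ᴴ * L₂)) := by
  have hS : S₂ᴴ * S₂ = 1 := mem_unitaryGroup_iff'.mp hS₂
  have hI : Complex.I * (2 * Complex.I)⁻¹ = 1 / 2 := by
    field_simp
  rw [hpGen, hpGen, hpGen, seriesProd_fromBlocks, fromBlocks_inj]
  refine ⟨?_, ?_, ?_, ?_⟩
  · rw [conjTranspose_mul_self_add_mul hS]
    simp only [smul_add, smul_sub, smul_smul, hI, Matrix.neg_mul, Matrix.mul_assoc]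
    module
  · simp only [conjTranspose_add, conjTranspose_mul, Matrix.add_mul, Matrix.mul_assoc,
      ← Matrix.mul_assoc S₂ᴴ, hS, Matrix.one_mul, Matrix.mul_sub, Matrix.mul_one,
      Matrix.neg_mul]
    abel
  · simp only [Matrix.sub_mul, Matrix.one_mul]
    abel
  · noncomm_ring

/-- For Hudson–Parthasarathy triples the series product of Itô generator matrices is again
an Itô generator matrix:
`G_(S₂,L₂,H₂) ◁ G_(S₁,L₁,H₁) = G_(S₂S₁, L₂ + S₂L₁, H₁ + H₂ + Im(L₂†S₂L₁))`,
where `Im X = (X - X†)/(2i)`. -/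
theorem hpGen_seriesProd {p q : ℕ}
    (S₁ S₂ : Matrix (Fin q) (Fin q) ℂ)
    (L₁ L₂ : Matrix (Fin q) (Fin p) ℂ)
    (H₁ H₂ : Matrix (Fin p) (Fin p) ℂ)
    (hS₁ : S₁ ∈ Matrix.unitaryGroup (Fin q) ℂ)
    (hS₂ : S₂ ∈ Matrix.unitaryGroup (Fin q) ℂ)
    (hH₁ : H₁ᴴ = H₁) (hH₂ : H₂ᴴ = H₂) :
    seriesProd (hpGen S₂ L₂ H₂) (hpGen S₁ L₁ H₁) =
      hpGen (S₂ * S₁) (L₂ + S₂ * L₁)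
        (H₁ + H₂ + (2 * Complex.I)⁻¹ • (L₂ᴴ * S₂ * L₁ - L₁ᴴ * S₂ᴴ * L₂)) :=
  hpGen_seriesProd_general S₁ S₂ L₁ L₂ H₁ H₂ hS₂
end

section
/- If G is a unitary Itô generator matrix, i.e., G = G_{(S,L,H)} = [[-(1/2)L†L - iH, -L†S],[L, S-I]] with S unitary and H self-adjoint, then its adjoint G† is a two-sided inverse for the series product ◁: G ◁ G† = 0 = G† ◁ G, where G₂ ◁ G₁ = G₁ + G₂ + G₂δ̂G₁ with δ̂ = [[0,0],[0,I]], and furthermore G† = G_{(S†, -S†L, -H)}. -/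
open Matrix

/-! The series product of two generators with unitary scattering matrices is again a generator:
`G_(S₂,L₂,H₂) ◁ G_(S₁,L₁,H₁) = G_(S₂S₁, L₂ + S₂L₁, H₁ + H₂ + Im(L₂†S₂L₁))`,
and `G_(I,0,0) = 0`.
Inserting `G† = G_(S†,-S†L,-H)` on either side gives `S = I` and `L = 0`, and the Hamiltonian
correction is `Im(-L†L) = 0` because `L†L` is self-adjoint. -/

open ComplexStarModule

section
variable {p q : ℕ}

lemma fromBlocks_mul_deltaHat_mul {A A' : Matrix (Fin p) (Fin p) ℂ}
    {B B' : Matrix (Fin p) (Fin q) ℂ} {C C' : Matrix (Fin q) (Fin p) ℂ}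
    {D D' : Matrix (Fin q) (Fin q) ℂ} :
    fromBlocks A B C D * deltaHat p q * fromBlocks A' B' C' D' =
      fromBlocks (B * C') (B * D') (D * C') (D * D') := by
  simp [deltaHat, fromBlocks_multiply]

lemma hpGen_one_zero_zero :
    hpGen (1 : Matrix (Fin q) (Fin q) ℂ) (0 : Matrix (Fin q) (Fin p) ℂ) 0 = 0 := by
  simp [hpGen, fromBlocks_zero]

lemma hpGen_conjTranspose {S : Matrix (Fin q) (Fin q) ℂ} (hS : S * Sᴴ = 1)
    (L : Matrix (Fin q) (Fin p) ℂ) {H : Matrix (Fin p) (Fin p) ℂ} (hH : Hᴴ = H) :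
    (hpGen S L H)ᴴ = hpGen Sᴴ (-(Sᴴ * L)) (-H) := by
  have hLS : Lᴴ * S * Sᴴ = Lᴴ := by rw [Matrix.mul_assoc, hS, Matrix.mul_one]
  have hLSSL : (Lᴴ * S) * (Sᴴ * L) = Lᴴ * L := by rw [← Matrix.mul_assoc, hLS]
  simp only [hpGen, fromBlocks_conjTranspose, conjTranspose_sub, conjTranspose_smul,
    conjTranspose_mul, conjTranspose_conjTranspose, conjTranspose_neg, conjTranspose_one, hH,
    Matrix.neg_mul, Matrix.mul_neg, neg_neg, hLSSL, hLS]
  congr 1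
  rw [show star (-(1/2 : ℂ)) = -(1/2 : ℂ) by simp, Complex.star_def, Complex.conj_I]
  module

lemma seriesProd_hpGen {S₂ S₁ : Matrix (Fin q) (Fin q) ℂ} (hS₂ : S₂ᴴ * S₂ = 1)
    (L₂ L₁ : Matrix (Fin q) (Fin p) ℂ) (H₂ H₁ : Matrix (Fin p) (Fin p) ℂ) :
    seriesProd (hpGen S₂ L₂ H₂) (hpGen S₁ L₁ H₁) =
      hpGen (S₂ * S₁) (L₂ + S₂ * L₁) (H₁ + H₂ + ℑ (L₂ᴴ * S₂ * L₁)) := by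
  rw [seriesProd, hpGen, hpGen, fromBlocks_mul_deltaHat_mul, fromBlocks_add, fromBlocks_add, hpGen]
  congr 1
  · rw [imaginaryPart_apply_coe]
    have hL₁ : L₁ᴴ * (S₂ᴴ * (S₂ * L₁)) = L₁ᴴ * L₁ := by
      rw [← Matrix.mul_assoc S₂ᴴ, hS₂, Matrix.one_mul]
    simp only [star_eq_conjTranspose, conjTranspose_add, conjTranspose_mul,
      conjTranspose_conjTranspose, Matrix.add_mul, Matrix.mul_add, Matrix.mul_assoc, hL₁,
      Matrix.neg_mul, smul_add, neg_smul, smul_neg, smul_smul, Complex.I_mul_I]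
    module
  · rw [conjTranspose_add, Matrix.add_mul, conjTranspose_mul, Matrix.mul_assoc,
      ← Matrix.mul_assoc S₂ᴴ, hS₂]
    simp only [Matrix.neg_mul, Matrix.mul_sub, Matrix.one_mul, Matrix.mul_one, Matrix.mul_assoc]
    abel
  · rw [Matrix.sub_mul, Matrix.one_mul]
    abel
  · noncomm_ring

end

/-- If `G = G_(S,L,H)` is a unitary Itô generator matrix then `G†` is a two-sided
inverse for the series product: `G ◁ G† = 0 = G† ◁ G`, and `G† = G_(S†, -S†L, -H)`. -/
theorem hpGen_adjoint_inverse {p q : ℕ}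
    (S : Matrix (Fin q) (Fin q) ℂ) (L : Matrix (Fin q) (Fin p) ℂ)
    (H : Matrix (Fin p) (Fin p) ℂ)
    (hS : S ∈ Matrix.unitaryGroup (Fin q) ℂ) (hH : Hᴴ = H) :
    seriesProd (hpGen S L H) (hpGen S L H)ᴴ = 0 ∧
    seriesProd (hpGen S L H)ᴴ (hpGen S L H) = 0 ∧
    (hpGen S L H)ᴴ = hpGen Sᴴ (-(Sᴴ * L)) (-H) := by
  have hSS : Sᴴ * S = 1 := hS.1
  have hSS' : S * Sᴴ = 1 := hS.2
  have hLSSL : Lᴴ * S * (Sᴴ * L) = Lᴴ * L := by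
    rw [Matrix.mul_assoc, ← Matrix.mul_assoc S, hSS', Matrix.one_mul]
  have hLL : ℑ (-(Lᴴ * L)) = 0 := by
    rw [map_neg, (isHermitian_conjTranspose_mul_self L).isSelfAdjoint.imaginaryPart, neg_zero]
  have hadj := hpGen_conjTranspose hSS' L hH
  refine ⟨?_, ?_, hadj⟩ <;> rw [hadj, seriesProd_hpGen (by simpa), ← hpGen_one_zero_zero]
  · rw [hSS', Matrix.mul_neg, ← Matrix.mul_assoc, hSS', Matrix.one_mul, add_neg_cancel,
      Matrix.mul_neg, hLSSL, hLL, neg_add_cancel, ZeroMemClass.coe_zero, add_zero]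
  · rw [hSS, neg_add_cancel, conjTranspose_neg, conjTranspose_mul, conjTranspose_conjTranspose,
      Matrix.neg_mul, Matrix.neg_mul, Matrix.mul_assoc Lᴴ, hSS', Matrix.mul_one, hLL,
      add_neg_cancel, ZeroMemClass.coe_zero, add_zero]
end

section
/- For the Belavkin Lie algebra element ℍ = [[0,μ,κ],[0,ν,λ],[0,0,0]] (3×3 block strictly/upper triangular matrix), the matrix exponential satisfies exp(ℍ) = [[I, M, K],[0, N, L],[0,0,I]] with K = κ + μ·e₂(ν)·λ, M = μ·e₁(ν), L = e₁(ν)·λ, N = exp(ν), where e₁(z) = (eᶻ - 1)/z and e₂(z) = (eᶻ - 1 - z)/z² are the decapitated exponential functions, interpreted for matrix argument ν as e₁(ν) = Σ_{n≥0} νⁿ/(n+1)! and e₂(ν) = Σ_{n≥0} νⁿ/(n+2)!. -/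
/-!
Two matrices of the shape of `ℍ` multiply to one of the same shape:
`[[0,μ,κ],[0,ν,λ],[0,0,0]] · [[0,μ',κ'],[0,ν',λ'],[0,0,0]] = [[0,μν',μλ'],[0,νν',νλ'],[0,0,0]]`.
Hence `ℍⁿ⁺² = [[0, μνⁿ⁺¹, μνⁿλ], [0, νⁿ⁺², νⁿ⁺¹λ], [0,0,0]]`, and splitting the exponential
series as `1 + ℍ + Σ ℍⁿ⁺²/(n+2)!` it sums blockwise to the series of `e₂(ν)`, `e₁(ν) - 1` and
`exp ν - 1 - ν`, all of which converge by comparison with the exponential series.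
-/

open Matrix

/-- The matrix exponential `exp(A) = Σ_{n≥0} Aⁿ/n!`. -/
noncomputable def mexp {m : Type*} [Fintype m] [DecidableEq m]
    (A : Matrix m m ℂ) : Matrix m m ℂ :=
  ∑' n : ℕ, ((n.factorial : ℂ))⁻¹ • A ^ n

/-- The first decapitated exponential `e₁(ν) = (e^ν - 1)/ν = Σ_{n≥0} νⁿ/(n+1)!`. -/
noncomputable def decExp₁ {m : Type*} [Fintype m] [DecidableEq m]
    (ν : Matrix m m ℂ) : Matrix m m ℂ :=
  ∑' n : ℕ, (((n + 1).factorial : ℂ))⁻¹ • ν ^ n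

/-- The second decapitated exponential `e₂(ν) = (e^ν - 1 - ν)/ν² = Σ_{n≥0} νⁿ/(n+2)!`. -/
noncomputable def decExp₂ {m : Type*} [Fintype m] [DecidableEq m]
    (ν : Matrix m m ℂ) : Matrix m m ℂ :=
  ∑' n : ℕ, (((n + 2).factorial : ℂ))⁻¹ • ν ^ n

section HasSum

variable {X l m n o R : Type*}

theorem HasSum.matrix_fromBlocks [AddCommMonoid R] [TopologicalSpace R]
    {f₁₁ : X → Matrix n l R} {f₁₂ : X → Matrix n m R} {f₂₁ : X → Matrix o l R}
    {f₂₂ : X → Matrix o m R} {a₁₁ : Matrix n l R} {a₁₂ : Matrix n m R} {a₂₁ : Matrix o l R}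
    {a₂₂ : Matrix o m R} (h₁₁ : HasSum f₁₁ a₁₁) (h₁₂ : HasSum f₁₂ a₁₂) (h₂₁ : HasSum f₂₁ a₂₁)
    (h₂₂ : HasSum f₂₂ a₂₂) :
    HasSum (fun x => fromBlocks (f₁₁ x) (f₁₂ x) (f₂₁ x) (f₂₂ x))
      (fromBlocks a₁₁ a₁₂ a₂₁ a₂₂) := by
  refine Pi.hasSum.2 fun i => Pi.hasSum.2 fun j => ?_
  rcases i with i | i <;> rcases j with j | j
  exacts [Pi.hasSum.1 (Pi.hasSum.1 h₁₁ i) j, Pi.hasSum.1 (Pi.hasSum.1 h₁₂ i) j,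
    Pi.hasSum.1 (Pi.hasSum.1 h₂₁ i) j, Pi.hasSum.1 (Pi.hasSum.1 h₂₂ i) j]

theorem HasSum.matrix_fromCols [AddCommMonoid R] [TopologicalSpace R]
    {f₁ : X → Matrix m n R} {f₂ : X → Matrix m o R} {a₁ : Matrix m n R} {a₂ : Matrix m o R}
    (h₁ : HasSum f₁ a₁) (h₂ : HasSum f₂ a₂) :
    HasSum (fun x => fromCols (f₁ x) (f₂ x)) (fromCols a₁ a₂) := by
  refine Pi.hasSum.2 fun i => Pi.hasSum.2 fun j => ?_
  rcases j with j | j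
  exacts [Pi.hasSum.1 (Pi.hasSum.1 h₁ i) j, Pi.hasSum.1 (Pi.hasSum.1 h₂ i) j]

variable [Fintype m] [NonUnitalNonAssocSemiring R] [TopologicalSpace R] [IsTopologicalSemiring R]

theorem HasSum.matrix_mul_left (A : Matrix l m R) {f : X → Matrix m n R} {a : Matrix m n R}
    (hf : HasSum f a) : HasSum (fun x => A * f x) (A * a) :=
  hf.map (mulLeftLinearMap n ℕ A) (continuous_const.matrix_mul continuous_id)

theorem HasSum.matrix_mul_right (B : Matrix m n R) {f : X → Matrix l m R} {a : Matrix l m R}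
    (hf : HasSum f a) : HasSum (fun x => f x * B) (a * B) :=
  hf.map (mulRightLinearMap l ℕ B) (continuous_id.matrix_mul continuous_const)

end HasSum

section Belavkin

variable {l m o R : Type*}

def belavkinMatrix [Zero R] (κ : Matrix l o R) (μ : Matrix l m R) (lam : Matrix m o R)
    (ν : Matrix m m R) : Matrix (l ⊕ (m ⊕ o)) (l ⊕ (m ⊕ o)) R :=
  fromBlocks 0 (fromCols μ κ) 0 (fromBlocks ν lam 0 0)

theorem belavkinMatrix_add [AddZeroClass R] (κ κ' : Matrix l o R) (μ μ' : Matrix l m R)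
    (lam lam' : Matrix m o R) (ν ν' : Matrix m m R) :
    belavkinMatrix κ μ lam ν + belavkinMatrix κ' μ' lam' ν' =
      belavkinMatrix (κ + κ') (μ + μ') (lam + lam') (ν + ν') := by
  ext (i | i | i) (j | j | j) <;> simp [belavkinMatrix]

theorem smul_belavkinMatrix {S : Type*} [Zero R] [SMulZeroClass S R] (c : S) (κ : Matrix l o R)
    (μ : Matrix l m R) (lam : Matrix m o R) (ν : Matrix m m R) :
    c • belavkinMatrix κ μ lam ν = belavkinMatrix (c • κ) (c • μ) (c • lam) (c • ν) := by
  ext (i | i | i) (j | j | j) <;> simp [belavkinMatrix]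

theorem HasSum.belavkinMatrix {X : Type*} [AddCommMonoid R] [TopologicalSpace R]
    {κ : X → Matrix l o R} {μ : X → Matrix l m R} {lam : X → Matrix m o R}
    {ν : X → Matrix m m R} {κ₀ : Matrix l o R} {μ₀ : Matrix l m R} {lam₀ : Matrix m o R}
    {ν₀ : Matrix m m R} (hκ : HasSum κ κ₀) (hμ : HasSum μ μ₀) (hlam : HasSum lam lam₀)
    (hν : HasSum ν ν₀) :
    HasSum (fun x => belavkinMatrix (κ x) (μ x) (lam x) (ν x))
      (belavkinMatrix κ₀ μ₀ lam₀ ν₀) :=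
  hasSum_zero.matrix_fromBlocks (hμ.matrix_fromCols hκ) hasSum_zero
    (hν.matrix_fromBlocks hlam hasSum_zero hasSum_zero)

theorem belavkinMatrix_mul [Fintype l] [Fintype m] [Fintype o] [Semiring R] (κ κ' : Matrix l o R)
    (μ μ' : Matrix l m R) (lam lam' : Matrix m o R) (ν ν' : Matrix m m R) :
    belavkinMatrix κ μ lam ν * belavkinMatrix κ' μ' lam' ν' =
      belavkinMatrix (μ * lam') (μ * ν') (ν * lam') (ν * ν') := by
  simp [belavkinMatrix, fromBlocks_multiply, fromCols_mul_fromBlocks]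

variable [DecidableEq l] [DecidableEq m] [DecidableEq o]

theorem one_add_belavkinMatrix [AddMonoidWithOne R] (κ : Matrix l o R) (μ : Matrix l m R)
    (lam : Matrix m o R) (ν : Matrix m m R) :
    1 + belavkinMatrix κ μ lam ν = fromBlocks 1 (fromCols μ κ) 0 (fromBlocks (1 + ν) lam 0 1) := by
  ext (i | i | i) (j | j | j) <;> simp [belavkinMatrix, one_apply]

variable [Fintype l] [Fintype m] [Fintype o]

theorem belavkinMatrix_pow_add_two [Semiring R] (κ : Matrix l o R) (μ : Matrix l m R)
    (lam : Matrix m o R) (ν : Matrix m m R) (n : ℕ) :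
    belavkinMatrix κ μ lam ν ^ (n + 2) =
      belavkinMatrix (μ * ν ^ n * lam) (μ * ν ^ (n + 1)) (ν ^ (n + 1) * lam) (ν ^ (n + 2)) := by
  induction n with
  | zero => simp [sq, belavkinMatrix_mul]
  | succ n ih =>
    rw [pow_succ' _ (n + 2), ih, belavkinMatrix_mul]
    simp [pow_succ', Matrix.mul_assoc]

end Belavkin

open scoped Nat

theorem summable_inv_factorial_add_smul_pow {𝕂 𝔸 : Type*} [RCLike 𝕂] [NormedRing 𝔸]
    [NormedAlgebra 𝕂 𝔸] [CompleteSpace 𝔸] (k : ℕ) (a : 𝔸) :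
    Summable fun n : ℕ => ((n + k)! : 𝕂)⁻¹ • a ^ n := by
  refine .of_norm_bounded (NormedSpace.norm_expSeries_summable' (𝕂 := 𝕂) a) fun n => ?_
  rw [norm_smul, norm_smul, norm_inv, norm_inv, RCLike.norm_natCast, RCLike.norm_natCast]
  gcongr
  exact Nat.le_add_right n k

theorem Matrix.summable_inv_factorial_add_smul_pow {𝕂 m : Type*} [RCLike 𝕂] [Fintype m]
    [DecidableEq m] (k : ℕ) (A : Matrix m m 𝕂) :
    Summable fun n : ℕ => ((n + k)! : 𝕂)⁻¹ • A ^ n := by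
  -- The `L∞` operator norm induces the product uniformity, but not reducibly, so completeness
  -- is found before the norm is installed and passed explicitly.
  have hA : CompleteSpace (Matrix m m 𝕂) := inferInstance
  let := Matrix.linftyOpNormedRing (n := m) (α := 𝕂)
  let := Matrix.linftyOpNormedAlgebra (n := m) (R := 𝕂) (α := 𝕂)
  exact @_root_.summable_inv_factorial_add_smul_pow _ _ _ _ _ hA k A

section DecapitatedExp

variable {m : Type*} [Fintype m] [DecidableEq m] (A : Matrix m m ℂ)

theorem hasSum_mexp : HasSum (fun n : ℕ => (n ! : ℂ)⁻¹ • A ^ n) (mexp A) :=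
  (by simpa using A.summable_inv_factorial_add_smul_pow 0 : Summable _).hasSum

theorem hasSum_decExp₁ : HasSum (fun n : ℕ => ((n + 1)! : ℂ)⁻¹ • A ^ n) (decExp₁ A) :=
  (A.summable_inv_factorial_add_smul_pow 1).hasSum

theorem hasSum_decExp₂ : HasSum (fun n : ℕ => ((n + 2)! : ℂ)⁻¹ • A ^ n) (decExp₂ A) :=
  (A.summable_inv_factorial_add_smul_pow 2).hasSum

theorem hasSum_decExp₁_sub_one :
    HasSum (fun n : ℕ => ((n + 2)! : ℂ)⁻¹ • A ^ (n + 1)) (decExp₁ A - 1) := by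
  simpa [add_assoc] using (hasSum_nat_add_iff' 1).2 (hasSum_decExp₁ A)

theorem hasSum_mexp_sub_one_sub :
    HasSum (fun n : ℕ => ((n + 2)! : ℂ)⁻¹ • A ^ (n + 2)) (mexp A - 1 - A) := by
  simpa [Finset.sum_range_succ, sub_sub] using (hasSum_nat_add_iff' 2).2 (hasSum_mexp A)

end DecapitatedExp

section BelavkinExp

variable {l m o : Type*} [Fintype l] [Fintype m] [Fintype o] [DecidableEq l] [DecidableEq m]
  [DecidableEq o] (κ : Matrix l o ℂ) (μ : Matrix l m ℂ) (lam : Matrix m o ℂ) (ν : Matrix m m ℂ)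

theorem hasSum_belavkinMatrix_pow_add_two :
    HasSum (fun n : ℕ => ((n + 2)! : ℂ)⁻¹ • belavkinMatrix κ μ lam ν ^ (n + 2))
      (belavkinMatrix (μ * decExp₂ ν * lam) (μ * (decExp₁ ν - 1)) ((decExp₁ ν - 1) * lam)
        (mexp ν - 1 - ν)) := by
  simp only [belavkinMatrix_pow_add_two, smul_belavkinMatrix]
  refine .belavkinMatrix ?_ ?_ ?_ (hasSum_mexp_sub_one_sub ν)
  · simpa [Matrix.mul_smul, Matrix.smul_mul] using
      ((hasSum_decExp₂ ν).matrix_mul_left μ).matrix_mul_right lam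
  · simpa [Matrix.mul_smul] using (hasSum_decExp₁_sub_one ν).matrix_mul_left μ
  · simpa [Matrix.smul_mul] using (hasSum_decExp₁_sub_one ν).matrix_mul_right lam

theorem mexp_belavkinMatrix :
    mexp (belavkinMatrix κ μ lam ν) =
      fromBlocks 1 (fromCols (μ * decExp₁ ν) (κ + μ * decExp₂ ν * lam)) 0
        (fromBlocks (mexp ν) (decExp₁ ν * lam) 0 1) := by
  have hsum := (hasSum_nat_add_iff (f := fun n => (n ! : ℂ)⁻¹ • belavkinMatrix κ μ lam ν ^ n)
    2).1 (hasSum_belavkinMatrix_pow_add_two κ μ lam ν)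
  rw [(hasSum_mexp _).unique hsum, Finset.sum_range_succ, Finset.sum_range_one]
  simp only [Nat.factorial_zero, Nat.factorial_one, Nat.cast_one, inv_one, one_smul, pow_zero,
    pow_one]
  rw [add_comm, add_assoc, belavkinMatrix_add, one_add_belavkinMatrix]
  congr 2
  · rw [Matrix.mul_sub, Matrix.mul_one, add_sub_cancel]
  · abel
  · rw [Matrix.sub_mul, Matrix.one_mul, add_sub_cancel]

end BelavkinExp

/-- For the Belavkin Lie algebra element `ℍ = [[0,μ,κ],[0,ν,λ],[0,0,0]]` the matrix
exponential is `exp(ℍ) = [[I, μe₁(ν), κ + μe₂(ν)λ],[0, e^ν, e₁(ν)λ],[0,0,I]]`. -/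
theorem exp_belavkin_lie {p q : ℕ}
    (κ : Matrix (Fin p) (Fin p) ℂ) (μ : Matrix (Fin p) (Fin q) ℂ)
    (lam : Matrix (Fin q) (Fin p) ℂ) (ν : Matrix (Fin q) (Fin q) ℂ) :
    mexp (fromBlocks (0 : Matrix (Fin p) (Fin p) ℂ) (fromCols μ κ) 0
        (fromBlocks ν lam 0 0)) =
      fromBlocks 1 (fromCols (μ * decExp₁ ν) (κ + μ * decExp₂ ν * lam)) 0
        (fromBlocks (mexp ν) (decExp₁ ν * lam) 0 1) :=
  mexp_belavkinMatrix κ μ lam ν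
end
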